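/- arXiv:1501.07085 — 2 statements merged into one kernel-verified Lean document; each statement's English description precedes it below -/
import Mathlib

section
/- Let σ be a substitution on A = {1,2} and for [x, i] ∈ ℤ² × A define E_1(σ)[x,i] = {[M_σ x + l(p), j] : j ∈ A, p ∈ A*, pj is a prefix of σ(i)}. Then for substitutions σ, τ on A: E_1(στ)[x,i] = ⋃_{[y,j] ∈ E_1(τ)[x,i]} E_1(σ)[y,j]. -/
/-- Apply a substitution to a word. -/
def applyWord (σ : Fin 2 → List (Fin 2)) (w : List (Fin 2)) : List (Fin 2) :=
  w.flatMap σ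

/-- Integer incidence matrix of a substitution. -/
def incMatZ (σ : Fin 2 → List (Fin 2)) : Matrix (Fin 2) (Fin 2) ℤ :=
  Matrix.of fun i j => ((σ j).count i : ℤ)

/-- Integer abelianization of a word. -/
def abZ (w : List (Fin 2)) : Fin 2 → ℤ := fun i => (w.count i : ℤ)

/-- The one-dimensional geometric realization `E_1(σ)` of Arnoux–Ito, acting on
a single segment `[x,i]`. -/
def E1 (σ : Fin 2 → List (Fin 2)) (s : (Fin 2 → ℤ) × Fin 2) :
    Set ((Fin 2 → ℤ) × Fin 2) :=
  {yj | ∃ (p : List (Fin 2)) (j : Fin 2),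
    (p ++ [j]) <+: σ s.2 ∧ yj = ((incMatZ σ).mulVec s.1 + abZ p, j)}


lemma abZ_append (u v : List (Fin 2)) : abZ (u ++ v) = abZ u + abZ v := by
  funext i; simp [abZ, List.count_append]

lemma abZ_apply (σ : Fin 2 → List (Fin 2)) (w : List (Fin 2)) :
    abZ (applyWord σ w) = (incMatZ σ).mulVec (abZ w) := by
  induction w with
  | nil =>
    funext i
    simp [applyWord, abZ, Matrix.mulVec, dotProduct]
  | cons k w ih =>
    have h1 : applyWord σ (k :: w) = σ k ++ applyWord σ w := by simp [applyWord]
    rw [h1, abZ_append, ih]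
    funext i
    simp only [Matrix.mulVec, dotProduct, Fin.sum_univ_two, incMatZ, abZ,
      Matrix.of_apply, Pi.add_apply]
    fin_cases k <;> simp [List.count_cons] <;> ring

lemma prefix_flatMap (σ : Fin 2 → List (Fin 2)) :
    ∀ (w p : List (Fin 2)) (j : Fin 2),
      (p ++ [j]) <+: applyWord σ w ↔
      ∃ q k p', (q ++ [k]) <+: w ∧ (p' ++ [j]) <+: σ k ∧ p = applyWord σ q ++ p' := by
  intro w
  induction w with
  | nil =>
    intro p j
    simp only [applyWord, List.flatMap_nil]
    constructor
    · intro h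
      have := h.length_le
      simp at this
    · rintro ⟨q, k, p', hq, -, -⟩
      have := hq.length_le
      simp at this
  | cons a w ih =>
    intro p j
    have hflat : applyWord σ (a :: w) = σ a ++ applyWord σ w := by simp [applyWord]
    constructor
    · intro h
      rw [hflat] at h
      by_cases hlen : (p ++ [j]).length ≤ (σ a).length
      · have hpre : (p ++ [j]) <+: σ a :=
          List.prefix_of_prefix_length_le h (List.prefix_append _ _) hlen
        exact ⟨[], a, p, by simp, hpre, by simp [applyWord]⟩
      · push_neg at hlen
        have hlen' : (σ a).length ≤ p.length := by
          simp at hlen; omega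
        have hp' : p <+: σ a ++ applyWord σ w := ((List.prefix_append p [j]).trans h)
        have hσp : σ a <+: p :=
          List.prefix_of_prefix_length_le (List.prefix_append _ _) hp' hlen'
        obtain ⟨p₂, rfl⟩ := hσp
        have h2 : p₂ ++ [j] <+: applyWord σ w := by
          rw [List.append_assoc] at h
          exact (List.prefix_append_right_inj (σ a)).mp h
        obtain ⟨q, k, p', hq, hpre, rfl⟩ := (ih p₂ j).mp h2
        exact ⟨a :: q, k, p', by simpa using hq, hpre, by simp [applyWord]⟩
    · rintro ⟨q, k, p', hq, hpre, rfl⟩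
      obtain ⟨r, hr⟩ := hq
      obtain ⟨s, hs⟩ := hpre
      refine ⟨s ++ applyWord σ r, ?_⟩
      rw [← hr]
      rw [show applyWord σ (q ++ [k] ++ r) = applyWord σ q ++ (σ k ++ applyWord σ r)
            from by simp [applyWord], ← hs]
      simp

lemma incMatZ_comp (σ τ : Fin 2 → List (Fin 2)) :
    incMatZ (fun j => applyWord σ (τ j)) = incMatZ σ * incMatZ τ := by
  ext i j
  have := congrFun (abZ_apply σ (τ j)) i
  simpa [incMatZ, abZ, Matrix.mul_apply, Matrix.mulVec, dotProduct] using this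


/-- Composition rule: `E_1(στ) = E_1(σ) ∘ E_1(τ)` on single segments. -/
theorem E1_comp (σ τ : Fin 2 → List (Fin 2))
    (hσ : ∀ i, σ i ≠ []) (hτ : ∀ i, τ i ≠ [])
    (x : Fin 2 → ℤ) (i : Fin 2) :
    E1 (fun j => applyWord σ (τ j)) (x, i) = ⋃ yj ∈ E1 τ (x, i), E1 σ yj := by
  ext yj
  simp only [Set.mem_iUnion, exists_prop]
  constructor
  · rintro ⟨p, j, hpre, rfl⟩
    obtain ⟨q, k, p', hq, hp', rfl⟩ := (prefix_flatMap σ (τ i) p j).mp hpre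
    refine ⟨((incMatZ τ).mulVec x + abZ q, k), ⟨q, k, hq, rfl⟩, p', j, hp', ?_⟩
    rw [incMatZ_comp, ← Matrix.mulVec_mulVec, abZ_append, abZ_apply,
      Matrix.mulVec_add]
    simp [add_assoc]
  · rintro ⟨⟨y, k⟩, ⟨q, k', hq, hyk⟩, p', j, hp', rfl⟩
    obtain ⟨rfl, rfl⟩ : y = (incMatZ τ).mulVec x + abZ q ∧ k = k' := by
      simpa [Prod.ext_iff] using hyk
    refine ⟨applyWord σ q ++ p', j,
      (prefix_flatMap σ (τ i) _ j).mpr ⟨q, k, p', hq, hp', rfl⟩, ?_⟩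
    rw [incMatZ_comp, ← Matrix.mulVec_mulVec, abZ_append, abZ_apply,
      Matrix.mulVec_add]
    simp [add_assoc]
end

section
/- Let σ = (σ_n) be a sequence of substitutions satisfying the recurrence property (R): there exist strictly increasing sequences (n_k), (ℓ_k) with (σ_{n_k}, σ_{n_k+1}, …, σ_{n_k+ℓ_k−1}) = (σ_0, σ_1, …, σ_{ℓ_k−1}) for all k. Then for any k_0 < k_1 < ⋯ < k_s with n_{k_j} + ℓ_{k_j} ≤ ℓ_{k_{j+1}} for all 0 ≤ j < s, one has σ_{[0, n_{k_0}+n_{k_1}+⋯+n_{k_s})} = σ_{[0,n_{k_s})} ⋯ σ_{[0,n_{k_1})} σ_{[0,n_{k_0})}, where σ_{[0,n)} = σ_0 σ_1 ⋯ σ_{n−1}. -/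
/-- The composed substitution `σ_{[0,n)} = σ_0 σ_1 ⋯ σ_{n−1}`. -/
def compSub (σ : ℕ → Fin 2 → List (Fin 2)) : ℕ → Fin 2 → List (Fin 2)
  | 0 => fun i => [i]
  | n + 1 => fun i => applyWord (compSub σ n) (σ n i)

lemma applyWord_applyWord (f g : Fin 2 → List (Fin 2)) (w : List (Fin 2)) :
    applyWord f (applyWord g w) = applyWord (fun i => applyWord f (g i)) w := by
  simp [applyWord, List.flatMap_assoc]

lemma applyWord_singleton (f : Fin 2 → List (Fin 2)) (i : Fin 2) : applyWord f [i] = f i := by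
  simp [applyWord]

lemma compSub_add (σ : ℕ → Fin 2 → List (Fin 2)) (a b : ℕ) :
    compSub σ (a + b) = fun i => applyWord (compSub σ a) (compSub (fun m => σ (a + m)) b i) := by
  induction b with
  | zero => funext i; simp [compSub, applyWord_singleton]
  | succ b ih =>
    funext i
    rw [← Nat.add_assoc, compSub.eq_2, compSub.eq_2, ih, applyWord_applyWord]

lemma compSub_congr {σ τ : ℕ → Fin 2 → List (Fin 2)} {b : ℕ} (h : ∀ m < b, σ m = τ m) :
    compSub σ b = compSub τ b := by
  induction b with
  | zero => rfl
  | succ b ih =>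
    funext i
    simp only [compSub, ih fun m hm => h m (by omega), h b (by omega)]

lemma compSub_add_of_shift_eq {σ : ℕ → Fin 2 → List (Fin 2)} {a b : ℕ}
    (h : ∀ m < b, σ (a + m) = σ m) :
    compSub σ (a + b) = fun i => applyWord (compSub σ a) (compSub σ b i) := by
  rw [compSub_add, compSub_congr h]

lemma sum_le_add_of_chain (n ℓ : ℕ → ℕ) {s : ℕ} (ks : Fin (s + 1) → ℕ)
    (hchain : ∀ j : Fin s, n (ks j.castSucc) + ℓ (ks j.castSucc) ≤ ℓ (ks j.succ)) :
    ∑ j, n (ks j) ≤ n (ks (Fin.last s)) + ℓ (ks (Fin.last s)) := by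
  induction s with
  | zero => simp
  | succ s ih =>
    have hprefix := ih (fun j => ks j.castSucc) fun j => by
      simpa only [Fin.succ_castSucc] using hchain j.castSucc
    have hlast := hchain (Fin.last s)
    rw [Fin.sum_univ_castSucc]
    simp only [Fin.succ_last, Nat.succ_eq_add_one] at hprefix hlast ⊢
    omega

theorem compSub_recurrence_general (σ : ℕ → Fin 2 → List (Fin 2))
    (n ℓ : ℕ → ℕ)
    (hR : ∀ k : ℕ, ∀ m : ℕ, m < ℓ k → σ (n k + m) = σ m)
    (s : ℕ) (ks : Fin (s + 1) → ℕ)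
    (hchain : ∀ j : Fin s,
      n (ks j.castSucc) + ℓ (ks j.castSucc) ≤ ℓ (ks j.succ)) :
    compSub σ (∑ j : Fin (s + 1), n (ks j)) =
      fun i => (List.ofFn ks).foldl
        (fun w k => applyWord (compSub σ (n k)) w) [i] := by
  induction s with
  | zero => funext i; simp [applyWord_singleton]
  | succ s ih =>
    have hprefix_chain : ∀ j : Fin s, n (ks j.castSucc.castSucc) + ℓ (ks j.castSucc.castSucc) ≤
        ℓ (ks j.succ.castSucc) := fun j => by
      simpa only [Fin.succ_castSucc] using hchain j.castSucc
    have hprefix_le : ∑ j : Fin (s + 1), n (ks j.castSucc) ≤ ℓ (ks (Fin.last (s + 1))) := by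
      have := sum_le_add_of_chain n ℓ (fun j => ks j.castSucc) hprefix_chain
      have hlast := hchain (Fin.last s)
      simp only [Fin.succ_last, Nat.succ_eq_add_one] at this hlast
      omega
    funext i
    rw [Fin.sum_univ_castSucc, add_comm,
      compSub_add_of_shift_eq fun m hm => hR _ m (hm.trans_le hprefix_le),
      ih (fun j => ks j.castSucc) hprefix_chain, List.ofFn_succ' (f := ks),
      List.concat_eq_append, List.foldl_append, List.foldl_cons, List.foldl_nil]

/-- Under the recurrence property (R) with strictly increasing sequences
`(n_k)`, `(ℓ_k)`, for indices `k_0 < ⋯ < k_s` with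
`n_{k_j} + ℓ_{k_j} ≤ ℓ_{k_{j+1}}` one has
`σ_{[0, n_{k_0}+⋯+n_{k_s})} = σ_{[0,n_{k_s})} ⋯ σ_{[0,n_{k_1})} σ_{[0,n_{k_0})}`. -/
theorem compSub_recurrence (σ : ℕ → Fin 2 → List (Fin 2))
    (n ℓ : ℕ → ℕ) (hn : StrictMono n) (hℓ : StrictMono ℓ)
    (hR : ∀ k : ℕ, ∀ m : ℕ, m < ℓ k → σ (n k + m) = σ m)
    (s : ℕ) (ks : Fin (s + 1) → ℕ) (hks : StrictMono ks)
    (hchain : ∀ j : Fin s,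
      n (ks j.castSucc) + ℓ (ks j.castSucc) ≤ ℓ (ks j.succ)) :
    compSub σ (∑ j : Fin (s + 1), n (ks j)) =
      fun i => (List.ofFn ks).foldl
        (fun w k => applyWord (compSub σ (n k)) w) [i] :=
  compSub_recurrence_general σ n ℓ hR s ks hchain
end
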